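/- arXiv:2511.01978 — 6 statements merged into one kernel-verified Lean document; each statement's English description precedes it below -/
import Mathlib

section
/- In the one-chord model, let μ ∈ ℝ, x ∈ ℝ, and set a = μ·√(1−q) and E = 2x/√(1−q). Let h : ℕ → ℝ satisfy the continuous big q-Hermite recurrence: h(0) = 1, 2x·h(0) = h(1) + a·h(0), and for all n ≥ 1, 2x·h(n) = h(n+1) + a·qⁿ·h(n) + (1−qⁿ)·h(n−1). Then the sequence ψ(n) = (1−q)^{n/2}·h(n)/(q;q)_n is a formal eigenvector of the EoW-brane Hamiltonian H̃ = a + a† + μW with eigenvalue E, i.e. for all n ≥ 0: [n+1]_q·ψ(n+1) + μ·qⁿ·ψ(n) + (if n = 0 then 0 else ψ(n−1)) = E·ψ(n). -/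
/-- The q-integer `[n]_q = (1 − qⁿ)/(1 − q)`. -/
noncomputable def qInt (q : ℝ) (n : ℕ) : ℝ := (1 - q ^ n) / (1 - q)

/-- The q-Pochhammer symbol `(q;q)_n = Π_{j=0}^{n−1}(1 − q^{j+1})`. -/
noncomputable def qPochQ (q : ℝ) (n : ℕ) : ℝ := ∏ j ∈ Finset.range n, (1 - q ^ (j + 1))

/-- Auxiliary computation for the inductive step. -/
lemma stmt0_aux (q μ x s P : ℝ) (hq0 : 0 < q) (hq1 : q < 1) (hs : s ≠ 0)
    (k : ℕ) (h : ℕ → ℝ) (hP : P ≠ 0)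
    (hk : 2 * x * h (k + 1) = h (k + 1 + 1) + μ * s * q ^ (k + 1) * h (k + 1) + (1 - q ^ (k + 1)) * h k) :
    (1 - q ^ (k + 1 + 1)) / (1 - q) *
          (s ^ k * (1 - q) * h (k + 1 + 1) / (P * (1 - q ^ (k + 1)) * (1 - q ^ (k + 1 + 1)))) +
        μ * q ^ (k + 1) * (s ^ k * s * h (k + 1) / (P * (1 - q ^ (k + 1)))) +
      s ^ k * h k / P =
    2 * x / s * (s ^ k * s * h (k + 1) / (P * (1 - q ^ (k + 1)))) := by
  have h1 : (1:ℝ) - q ^ (k+1) ≠ 0 := by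
    have : q^(k+1) < 1 := pow_lt_one₀ hq0.le hq1 (by omega); linarith
  have h2 : (1:ℝ) - q ^ (k+1+1) ≠ 0 := by
    have : q^(k+1+1) < 1 := pow_lt_one₀ hq0.le hq1 (by omega); linarith
  have hq' : (1:ℝ) - q ≠ 0 := by linarith
  have L : (1 - q ^ (k + 1 + 1)) / (1 - q) *
          (s ^ k * (1 - q) * h (k + 1 + 1) / (P * (1 - q ^ (k + 1)) * (1 - q ^ (k + 1 + 1)))) +
        μ * q ^ (k + 1) * (s ^ k * s * h (k + 1) / (P * (1 - q ^ (k + 1)))) +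
      s ^ k * h k / P
      = s ^ k * (h (k+1+1) + μ * s * q^(k+1) * h (k+1) + (1 - q^(k+1)) * h k) / (P * (1 - q^(k+1))) := by
    field_simp
  have R : 2 * x / s * (s ^ k * s * h (k + 1) / (P * (1 - q ^ (k + 1))))
      = s ^ k * (2 * x * h (k+1)) / (P * (1 - q^(k+1))) := by
    field_simp
  rw [L, R, hk]

/-- if `h` satisfies the continuous big q-Hermite recurrence with parameter
`a = μ√(1−q)`, then `ψ(n) = (1−q)^{n/2}·h(n)/(q;q)_n` is a formal eigenvector of the
EoW-brane Hamiltonian `H̃ = a + a† + μW` with eigenvalue `E = 2x/√(1−q)`: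
`[n+1]_q·ψ(n+1) + μ·qⁿ·ψ(n) + (if n = 0 then 0 else ψ(n−1)) = E·ψ(n)` for all `n`. -/
theorem stmt_0 (q μ x : ℝ) (hq0 : 0 < q) (hq1 : q < 1)
    (a E : ℝ)
    (ha : a = μ * Real.sqrt (1 - q))
    (hE : E = 2 * x / Real.sqrt (1 - q))
    (h : ℕ → ℝ) (h0 : h 0 = 1)
    (hrec0 : 2 * x * h 0 = h 1 + a * h 0)
    (hrec : ∀ n : ℕ, 1 ≤ n →
      2 * x * h n = h (n + 1) + a * q ^ n * h n + (1 - q ^ n) * h (n - 1))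
    (ψ : ℕ → ℝ)
    (hψ : ∀ n : ℕ, ψ n = Real.sqrt (1 - q) ^ n * h n / qPochQ q n) :
    ∀ n : ℕ,
      qInt q (n + 1) * ψ (n + 1) + μ * q ^ n * ψ n
        + (if n = 0 then 0 else ψ (n - 1)) = E * ψ n := by
  have hq' : (0:ℝ) < 1 - q := by linarith
  set s := Real.sqrt (1 - q) with hsdef
  have hs : 0 < s := Real.sqrt_pos.2 hq'
  have hs2 : s ^ 2 = 1 - q := Real.sq_sqrt hq'.le
  have hPpos : ∀ m, 0 < qPochQ q m := by
    intro m
    unfold qPochQ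
    apply Finset.prod_pos
    intro j _
    have : q ^ (j+1) < 1 := pow_lt_one₀ hq0.le hq1 (by omega)
    linarith
  have hPne : ∀ m, qPochQ q m ≠ 0 := fun m => (hPpos m).ne'
  have hPsucc : ∀ m, qPochQ q (m+1) = qPochQ q m * (1 - q ^ (m+1)) := by
    intro m; unfold qPochQ; rw [Finset.prod_range_succ]
  intro n
  cases n with
  | zero =>
    have hP0 : qPochQ q 0 = 1 := by unfold qPochQ; simp
    have hP1 : qPochQ q 1 = 1 - q := by unfold qPochQ; simp
    simp only [if_true, hψ, qInt, hE, hP0, hP1, pow_zero, pow_one, h0]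
    rw [ha] at hrec0
    rw [h0] at hrec0
    rw [← hs2]
    have hsne : s ≠ 0 := hs.ne'
    field_simp
    linear_combination (-(s^3)) * hrec0 + (-(h 1) * s) * hs2
  | succ k =>
    have hk := hrec (k+1) (by omega)
    simp only [Nat.add_sub_cancel] at hk
    rw [ha] at hk
    simp only [Nat.succ_ne_zero, if_false, hψ, qInt, hE, Nat.add_sub_cancel]
    rw [hPsucc (k+1), hPsucc k]
    have e1 : s ^ (k+1+1) = s ^ k * (1 - q) := by rw [← hs2]; ring
    have e2 : s ^ (k+1) = s ^ k * s := by ring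
    rw [e1, e2]
    exact stmt0_aux q μ x s (qPochQ q k) hq0 hq1 hs.ne' k h (hPne k)
      (by linear_combination hk)
end

section
/- In the one-chord model, for every k ∈ ℕ: ε(H̃^k δ_0) = Σ_{n=0}^{k} (μⁿ/[n]!_q)·ε(H^k δ_n), and moreover ε(H^k δ_n) = 0 whenever n > k. Equivalently, the vacuum moments ⟨ω|H̃^k|ω⟩ of the EoW-brane Hamiltonian H̃ = a + a† + μW equal the transition moments ⟨ω|H^k|B_μ⟩ of the undeformed Hamiltonian H = a + a† against the q-coherent state B_μ = Σ_n (μⁿ/[n]!_q) δ_n. -/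
namespace OneChord

/-- The q-integer `[n]_q = (1 − qⁿ)/(1 − q)`. -/
noncomputable def qIntR (q : ℝ) (n : ℕ) : ℝ := (1 - q ^ n) / (1 - q)

/-- The q-factorial `[n]!_q = Π_{j=1}^{n}[j]_q`. -/
noncomputable def qFactR (q : ℝ) (n : ℕ) : ℝ := ∏ j ∈ Finset.range n, qIntR q (j + 1)

/-- The one-chord space: finitely supported real functions on ℕ (chord numbers). -/
abbrev V : Type := ℕ →₀ ℝ

/-- The chord creation operator `a† δ_n = δ_{n+1}`. -/
noncomputable def aCre : V →ₗ[ℝ] V :=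
  Finsupp.lift V ℝ ℕ fun n => Finsupp.single (n + 1) 1

/-- The chord annihilation operator `a δ_n = [n]_q δ_{n−1}` (so `a δ_0 = 0`). -/
noncomputable def aAnn (q : ℝ) : V →ₗ[ℝ] V :=
  Finsupp.lift V ℝ ℕ fun n => Finsupp.single (n - 1) (qIntR q n)

/-- The weight operator `W δ_n = qⁿ δ_n`. -/
noncomputable def Wop (q : ℝ) : V →ₗ[ℝ] V :=
  Finsupp.lift V ℝ ℕ fun n => Finsupp.single n (q ^ n)

end OneChord

/-!
Write `c_j = μʲ/[j]!_q`. The formal coherent-state map `E δₙ = Σ_j c_j δ_{n+j}` satisfies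
`H E = E H̃`: comparing coefficients, this is `[n+j+1]_q - [n]_q = qⁿ [j+1]_q` together with
`[j+1]_q c_{j+1} = μ c_j`. Since `ε ∘ E = ε`, this gives `ε H̃ᵏ δ₀ = ε Hᵏ B_μ`. To stay inside
finitely supported vectors we prove `ε(H̃ᵏ δₙ) = Σ_{j<N} c_j ε(Hᵏ δ_{n+j})` for all `n` and
all `N > k`, by induction on `k`; the truncation is harmless because `ε(Hᵏ δₘ) = 0` for `m > k`.
-/

namespace OneChord

lemma qIntR_zero (q : ℝ) : qIntR q 0 = 0 := by simp [qIntR]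

lemma qIntR_add (q : ℝ) (hq : q ≠ 1) (n j : ℕ) :
    qIntR q (n + j) = qIntR q n + q ^ n * qIntR q j := by
  have : 1 - q ≠ 0 := sub_ne_zero.mpr hq.symm
  unfold qIntR
  field_simp
  ring

lemma qIntR_succ_pos (q : ℝ) (hq0 : 0 < q) (hq1 : q < 1) (n : ℕ) : 0 < qIntR q (n + 1) :=
  div_pos (sub_pos.mpr (pow_lt_one₀ hq0.le hq1 n.succ_ne_zero)) (sub_pos.mpr hq1)

lemma qFactR_pos (q : ℝ) (hq0 : 0 < q) (hq1 : q < 1) (n : ℕ) : 0 < qFactR q n :=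
  Finset.prod_pos fun j _ => qIntR_succ_pos q hq0 hq1 j

/-- The coefficients of the q-coherent state `B_μ`. -/
noncomputable def coherentCoeff (q μ : ℝ) (n : ℕ) : ℝ := μ ^ n / qFactR q n

lemma coherentCoeff_zero (q μ : ℝ) : coherentCoeff q μ 0 = 1 := by
  simp [coherentCoeff, qFactR]

lemma qIntR_mul_coherentCoeff_succ (q μ : ℝ) (hq0 : 0 < q) (hq1 : q < 1) (n : ℕ) :
    qIntR q (n + 1) * coherentCoeff q μ (n + 1) = μ * coherentCoeff q μ n := by
  have hfact : qFactR q (n + 1) = qFactR q n * qIntR q (n + 1) := Finset.prod_range_succ _ _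
  have := (qFactR_pos q hq0 hq1 n).ne'
  have := (qIntR_succ_pos q hq0 hq1 n).ne'
  rw [coherentCoeff, coherentCoeff, hfact]
  field_simp
  ring

lemma lift_single_one (f : ℕ → V) (n : ℕ) : Finsupp.lift V ℝ ℕ f (Finsupp.single n 1) = f n := by
  simp [Finsupp.lift_apply]

noncomputable def transitionMoment (T : Module.End ℝ V) (k n : ℕ) : ℝ :=
  ((T ^ k) (Finsupp.single n 1)) 0

lemma transitionMoment_zero (T : Module.End ℝ V) (n : ℕ) :
    transitionMoment T 0 n = if n = 0 then 1 else 0 := by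
  simp [transitionMoment, Finsupp.single_apply]

lemma transitionMoment_succ (T : Module.End ℝ V) (k n : ℕ) :
    transitionMoment T (k + 1) n = ((T ^ k) (T (Finsupp.single n 1))) 0 := by
  rw [transitionMoment, pow_succ, Module.End.mul_apply]

lemma transitionMoment_H_succ (q : ℝ) (k n : ℕ) :
    transitionMoment (aAnn q + aCre) (k + 1) n
      = qIntR q n * transitionMoment (aAnn q + aCre) k (n - 1)
        + transitionMoment (aAnn q + aCre) k (n + 1) := by
  rw [transitionMoment_succ, LinearMap.add_apply, aAnn, aCre, lift_single_one, lift_single_one,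
    ← Finsupp.smul_single_one, map_add, map_smul]
  rfl

lemma transitionMoment_Htilde_succ (q μ : ℝ) (k n : ℕ) :
    transitionMoment (aAnn q + aCre + μ • Wop q) (k + 1) n
      = qIntR q n * transitionMoment (aAnn q + aCre + μ • Wop q) k (n - 1)
        + transitionMoment (aAnn q + aCre + μ • Wop q) k (n + 1)
        + μ * q ^ n * transitionMoment (aAnn q + aCre + μ • Wop q) k n := by
  rw [transitionMoment_succ, LinearMap.add_apply, LinearMap.add_apply, LinearMap.smul_apply,
    aAnn, aCre, Wop, lift_single_one, lift_single_one, lift_single_one,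
    ← Finsupp.smul_single_one, ← Finsupp.smul_single_one (b := q ^ n), smul_smul,
    map_add, map_add, map_smul, map_smul]
  rfl

lemma transitionMoment_H_eq_zero_of_lt (q : ℝ) {k n : ℕ} (hkn : k < n) :
    transitionMoment (aAnn q + aCre) k n = 0 := by
  induction k generalizing n with
  | zero => simp [transitionMoment_zero, Nat.pos_iff_ne_zero.mp hkn]
  | succ k ih =>
    obtain ⟨m, rfl⟩ := Nat.exists_eq_add_of_lt hkn
    rw [transitionMoment_H_succ, ih (by omega), ih (by omega), mul_zero, add_zero]

theorem transitionMoment_Htilde_eq_sum (q μ : ℝ) (hq0 : 0 < q) (hq1 : q < 1) {k N : ℕ}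
    (hkN : k < N) (n : ℕ) :
    transitionMoment (aAnn q + aCre + μ • Wop q) k n
      = ∑ j ∈ Finset.range N, coherentCoeff q μ j * transitionMoment (aAnn q + aCre) k (n + j) := by
  set H : Module.End ℝ V := aAnn q + aCre
  induction k generalizing n N with
  | zero =>
    obtain ⟨N, rfl⟩ := Nat.exists_eq_succ_of_ne_zero hkN.ne'
    simp [Finset.sum_range_succ', transitionMoment_zero, coherentCoeff_zero]
  | succ k ih =>
    obtain ⟨N, rfl⟩ := Nat.exists_eq_succ_of_ne_zero (by omega : N ≠ 0)
    have lower : ∑ j ∈ Finset.range (N + 1),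
          coherentCoeff q μ j * (qIntR q n * transitionMoment H k (n + j - 1))
        = qIntR q n * transitionMoment (H + μ • Wop q) k (n - 1) := by
      rcases n with _ | n
      · simp [qIntR_zero]
      · simp only [Nat.add_sub_cancel, Nat.add_right_comm n 1, Nat.add_sub_cancel,
          ih (by omega : k < N + 1), Finset.mul_sum]
        exact Finset.sum_congr rfl fun j _ => by ring
    have diagonal : ∑ j ∈ Finset.range (N + 1),
          coherentCoeff q μ j * (q ^ n * qIntR q j * transitionMoment H k (n + j - 1))
        = μ * q ^ n * transitionMoment (H + μ • Wop q) k n := by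
      rw [Finset.sum_range_succ', ih (by omega : k < N), Finset.mul_sum]
      simp only [qIntR_zero, mul_zero, zero_mul, add_zero]
      refine Finset.sum_congr rfl fun j _ => ?_
      rw [Nat.add_succ_sub_one]
      linear_combination q ^ n * transitionMoment H k (n + j)
        * qIntR_mul_coherentCoeff_succ q μ hq0 hq1 j
    have upper : ∑ j ∈ Finset.range (N + 1), coherentCoeff q μ j * transitionMoment H k (n + j + 1)
        = transitionMoment (H + μ • Wop q) k (n + 1) := by
      rw [ih (by omega : k < N + 1)]
      exact Finset.sum_congr rfl fun j _ => by rw [Nat.add_right_comm]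
    rw [transitionMoment_Htilde_succ, ← lower, ← diagonal, ← upper, ← Finset.sum_add_distrib,
      ← Finset.sum_add_distrib]
    refine Finset.sum_congr rfl fun j _ => ?_
    rw [transitionMoment_H_succ, qIntR_add q hq1.ne]
    ring

end OneChord

open OneChord in
/-- the vacuum moments of the EoW-brane Hamiltonian `H̃ = a + a† + μW`
equal the transition moments of `H = a + a†` against the q-coherent state
`B_μ = Σ_n (μⁿ/[n]!_q) δ_n`:
`ε(H̃^k δ_0) = Σ_{n=0}^{k} (μⁿ/[n]!_q)·ε(H^k δ_n)`, and `ε(H^k δ_n) = 0` for `n > k`. -/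
theorem stmt_3 (q μ : ℝ) (hq0 : 0 < q) (hq1 : q < 1) :
    (∀ k : ℕ,
      ((((aAnn q + aCre + μ • Wop q : Module.End ℝ V)) ^ k) (Finsupp.single 0 1)) 0
        = ∑ n ∈ Finset.range (k + 1),
            (μ ^ n / qFactR q n)
              * ((((aAnn q + aCre : Module.End ℝ V)) ^ k) (Finsupp.single n 1)) 0) ∧
    (∀ k n : ℕ, k < n →
      ((((aAnn q + aCre : Module.End ℝ V)) ^ k) (Finsupp.single n 1)) 0 = 0) := by
  refine ⟨fun k => ?_, fun k n hkn => transitionMoment_H_eq_zero_of_lt q hkn⟩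
  have moments := transitionMoment_Htilde_eq_sum q μ hq0 hq1 k.lt_succ_self 0
  simp only [zero_add] at moments
  exact moments
end

section
/- In the chord-space model, the right creation and annihilation operators satisfy the generalized q-deformed oscillator relations: for all i, j ∈ {0,1}, a_{R,i} ∘ a†_{R,j} − Q(i,j)·(a†_{R,j} ∘ a_{R,i}) = δ_{ij}·id as linear operators on V. -/
namespace DSSYK

/-- Binary strings (chord words); the letter `0` is `false`, the letter `1` is `true`. -/
abbrev Str : Type := List Bool

/-- The chord space: finitely supported complex functions on binary strings. -/
abbrev Sp : Type := Str →₀ ℂ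

/-- Crossing weights: `Q 0 0 = q`, `Q 1 1 = q_m`, mixed crossings give `r`. -/
def Qmat (q qm r : ℝ) : Bool → Bool → ℂ
  | false, false => (q : ℂ)
  | true,  true  => (qm : ℂ)
  | _,     _     => (r : ℂ)

/-- Right creation `a†_{R,i}`: append the letter `i` on the right. -/
noncomputable def creR (i : Bool) : Sp →ₗ[ℂ] Sp :=
  Finsupp.lift Sp ℂ Str fun w => Finsupp.single (w ++ [i]) 1

/-- Value of the right annihilation operator on a basis string: delete one letter
equal to `i`, weighted by the crossing factors with all letters to its right. -/
noncomputable def annVecR (Q : Bool → Bool → ℂ) (i : Bool) : Str → Sp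
  | [] => 0
  | x :: t =>
      (if x = i then ((t.map (Q i)).prod) • Finsupp.single t (1 : ℂ) else 0)
        + Finsupp.mapDomain (List.cons x) (annVecR Q i t)

/-- Right annihilation `a_{R,i}`. -/
noncomputable def annR (Q : Bool → Bool → ℂ) (i : Bool) : Sp →ₗ[ℂ] Sp :=
  Finsupp.lift Sp ℂ Str (annVecR Q i)

/-- Left creation `a†_{L,i}`: prepend the letter `i`. -/
noncomputable def creL (i : Bool) : Sp →ₗ[ℂ] Sp :=
  Finsupp.lift Sp ℂ Str fun w => Finsupp.single (i :: w) 1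

/-- Value of the left annihilation operator on a basis string: delete one letter
equal to `i`, weighted by the crossing factors with all letters to its left. -/
noncomputable def annVecL (Q : Bool → Bool → ℂ) (i : Bool) : Str → Sp
  | [] => 0
  | x :: t =>
      (if x = i then Finsupp.single t (1 : ℂ) else 0)
        + Q i x • Finsupp.mapDomain (List.cons x) (annVecL Q i t)

/-- Left annihilation `a_{L,i}`. -/
noncomputable def annL (Q : Bool → Bool → ℂ) (i : Bool) : Sp →ₗ[ℂ] Sp :=
  Finsupp.lift Sp ℂ Str (annVecL Q i)

/-- Diagonal weight operator `δ_w ↦ c₀^{N₀(w)} · c₁^{N₁(w)} · δ_w`, where `N₀, N₁`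
count the `0`'s and `1`'s in `w`. -/
noncomputable def Wgen (c₀ c₁ : ℂ) : Sp →ₗ[ℂ] Sp :=
  Finsupp.lift Sp ℂ Str fun w =>
    Finsupp.single w (c₀ ^ (w.count false) * c₁ ^ (w.count true))

/-- The chord-counting weight operator `W δ_w = q^{N₀(w)} r^{N₁(w)} δ_w`. -/
noncomputable def Wop (q r : ℝ) : Sp →ₗ[ℂ] Sp := Wgen (q : ℂ) (r : ℂ)

/-- Right boundary operators `H_{R,i} = a_{R,i} + a†_{R,i}`. -/
noncomputable def HR (Q : Bool → Bool → ℂ) (i : Bool) : Sp →ₗ[ℂ] Sp := annR Q i + creR i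

/-- Left boundary operators `H_{L,i} = a_{L,i} + a†_{L,i}`. -/
noncomputable def HL (Q : Bool → Bool → ℂ) (i : Bool) : Sp →ₗ[ℂ] Sp := annL Q i + creL i

/-- The vacuum `ω = δ_{[]}` (the empty string). -/
noncomputable def vac : Sp := Finsupp.single [] 1

/-- `ε v = v([])`, the coefficient of the empty string. -/
def eps (v : Sp) : ℂ := v []

end DSSYK

/-! Deleting a letter `i` from `w ++ [j]` either deletes the appended letter (possible only
when `i = j`, with an empty crossing product) or deletes a letter of `w`, which then crosses
exactly one more letter, `j`, on its right and so picks up one extra factor `Q i j`. -/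

namespace DSSYK

open Finsupp

variable (Q : Bool → Bool → ℂ)

theorem creR_single (j : Bool) (w : Str) (c : ℂ) :
    creR j (single w c) = single (w ++ [j]) c := by
  simp [creR, smul_single]

theorem annR_single (i : Bool) (w : Str) (c : ℂ) :
    annR Q i (single w c) = c • annVecR Q i w := by
  simp [annR]

theorem creR_eq_lmapDomain (j : Bool) : creR j = lmapDomain ℂ ℂ (· ++ [j]) :=
  lhom_ext fun w c => by simp [creR_single]

theorem creR_mapDomain_cons (j x : Bool) (v : Sp) :
    creR j (mapDomain (List.cons x) v) = mapDomain (List.cons x) (creR j v) := by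
  simp only [creR_eq_lmapDomain, lmapDomain_apply, ← mapDomain_comp]
  rfl

theorem annVecR_append_singleton (i j : Bool) (w : Str) :
    annVecR Q i (w ++ [j])
      = (if i = j then single w 1 else 0) + Q i j • creR j (annVecR Q i w) := by
  induction w with
  | nil => by_cases h : i = j <;> simp [annVecR, h, eq_comm]
  | cons x t ih =>
      rw [List.cons_append, annVecR, ih, annVecR, mapDomain_add, mapDomain_smul,
        ← creR_mapDomain_cons, map_add, smul_add]
      split_ifs <;>
        simp [mapDomain_single, creR_single, smul_single, mul_comm, add_left_comm]

theorem annR_comp_creR_sub_smul (i j : Bool) :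
    annR Q i ∘ₗ creR j - Q i j • (creR j ∘ₗ annR Q i)
      = if i = j then (LinearMap.id : Sp →ₗ[ℂ] Sp) else 0 := by
  refine lhom_ext fun w c => ?_
  by_cases h : i = j <;>
    simp [creR_single, annR_single, annVecR_append_singleton, h, smul_comm c, smul_single]

end DSSYK

open DSSYK in
/-- the right creation and annihilation operators satisfy the generalized
q-deformed oscillator relations
`a_{R,i} ∘ a†_{R,j} − Q(i,j)·(a†_{R,j} ∘ a_{R,i}) = δ_{ij}·id`. -/
theorem stmt_4 (q qm r : ℝ) (i j : Bool) :
    annR (Qmat q qm r) i ∘ₗ creR j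
        - Qmat q qm r i j • (creR j ∘ₗ annR (Qmat q qm r) i)
      = if i = j then (LinearMap.id : Sp →ₗ[ℂ] Sp) else 0 :=
  annR_comp_creR_sub_smul _ i j
end

section
/- In the chord-space model with μ ∈ ℂ, define H̃_{L,0} = a_{L,0} + a†_{L,0} − μ(1−q)·(a†_{L,0} ∘ a_{L,0}) + μ·id. Then H̃_{L,0} commutes with both generators of the EoW-brane boundary algebra: H̃_{L,0} ∘ H̃_{R,0} = H̃_{R,0} ∘ H̃_{L,0} and H̃_{L,0} ∘ H_{R,1} = H_{R,1} ∘ H̃_{L,0}, where H̃_{R,0} = a_{R,0} + a†_{R,0} + μW and H_{R,1} = a_{R,1} + a†_{R,1}. (Explicit element of the commutant of the single-sided EoW-brane algebra.) -/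
namespace DSSYKAux
open DSSYK Finsupp

lemma lift_single (f : Str → Sp) (w : Str) (b : ℂ) :
    Finsupp.lift Sp ℂ Str f (Finsupp.single w b) = b • f w := by
  simp [Finsupp.lift_apply, Finsupp.sum_single_index]

lemma creR_single (i : Bool) (w : Str) (b : ℂ) :
    creR i (Finsupp.single w b) = Finsupp.single (w ++ [i]) b := by
  simp [creR, lift_single, Finsupp.smul_single]

lemma creL_single (i : Bool) (w : Str) (b : ℂ) :
    creL i (Finsupp.single w b) = Finsupp.single (i :: w) b := by
  simp [creL, lift_single, Finsupp.smul_single]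

lemma annR_single (Q : Bool → Bool → ℂ) (i : Bool) (w : Str) (b : ℂ) :
    annR Q i (Finsupp.single w b) = b • annVecR Q i w := by
  simp [annR, lift_single]

lemma annL_single (Q : Bool → Bool → ℂ) (i : Bool) (w : Str) (b : ℂ) :
    annL Q i (Finsupp.single w b) = b • annVecL Q i w := by
  simp [annL, lift_single]

lemma Wgen_single (c₀ c₁ : ℂ) (w : Str) (b : ℂ) :
    Wgen c₀ c₁ (Finsupp.single w b)
      = Finsupp.single w (b * (c₀ ^ (w.count false) * c₁ ^ (w.count true))) := by
  rw [Wgen, lift_single, Finsupp.smul_single, smul_eq_mul]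

lemma map_prod_count (f : Bool → ℂ) (t : Str) :
    (t.map f).prod = f false ^ t.count false * f true ^ t.count true := by
  induction t with
  | nil => simp
  | cons x t ih =>
    cases x <;> simp [ih, List.count_cons, pow_succ] <;> ring

lemma creL_eq (i : Bool) (v : Sp) : creL i v = v.mapDomain (List.cons i) := by
  induction v using Finsupp.induction_linear with
  | zero => simp
  | add f g hf hg => simp [Finsupp.mapDomain_add, map_add, hf, hg]
  | single a b => simp [creL_single, Finsupp.mapDomain_single]

lemma creR_cons (i x : Bool) (v : Sp) :
    creR i (v.mapDomain (List.cons x)) = (creR i v).mapDomain (List.cons x) := by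
  induction v using Finsupp.induction_linear with
  | zero => simp
  | add f g hf hg => simp [Finsupp.mapDomain_add, map_add, hf, hg]
  | single a b => simp [creR_single, Finsupp.mapDomain_single]

lemma annR_cons (Q : Bool → Bool → ℂ) (i x : Bool) (v : Sp) :
    annR Q i (v.mapDomain (List.cons x))
      = (if x = i then Wgen (Q i false) (Q i true) v else 0)
        + (annR Q i v).mapDomain (List.cons x) := by
  induction v using Finsupp.induction_linear with
  | zero => simp
  | add f g hf hg =>
    simp only [Finsupp.mapDomain_add, map_add, hf, hg]
    by_cases h : x = i <;> simp only [h, if_true, if_false] <;> abel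
  | single a b =>
    rw [Finsupp.mapDomain_single, annR_single, annR_single]
    show b • annVecR Q i (x :: a) = _
    rw [annVecR, map_prod_count, Wgen_single, Finsupp.mapDomain_smul, smul_add]
    by_cases hx : x = i
    · rw [if_pos hx, if_pos hx, smul_smul, Finsupp.smul_single, smul_eq_mul, mul_one, mul_comm]
    · rw [if_neg hx, if_neg hx, smul_zero, zero_add]

lemma annL_cons (Q : Bool → Bool → ℂ) (i x : Bool) (v : Sp) :
    annL Q i (v.mapDomain (List.cons x))
      = (if x = i then v else 0)
        + Q i x • (annL Q i v).mapDomain (List.cons x) := by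
  induction v using Finsupp.induction_linear with
  | zero => simp
  | add f g hf hg =>
    simp only [Finsupp.mapDomain_add, map_add, hf, hg, smul_add]
    by_cases h : x = i <;> simp only [h, if_true, if_false] <;> abel
  | single a b =>
    rw [Finsupp.mapDomain_single, annL_single, annL_single]
    show b • annVecL Q i (x :: a) = _
    rw [annVecL, Finsupp.mapDomain_smul, smul_add]
    by_cases hx : x = i
    · rw [if_pos hx, if_pos hx, Finsupp.smul_single, smul_eq_mul, mul_one, smul_comm]
    · rw [if_neg hx, if_neg hx, smul_zero, zero_add, zero_add, smul_comm]

lemma Wgen_cons (c₀ c₁ : ℂ) (x : Bool) (v : Sp) :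
    Wgen c₀ c₁ (v.mapDomain (List.cons x))
      = (cond x c₁ c₀) • (Wgen c₀ c₁ v).mapDomain (List.cons x) := by
  induction v using Finsupp.induction_linear with
  | zero => simp
  | add f g hf hg => simp [Finsupp.mapDomain_add, map_add, hf, hg, smul_add]
  | single a b =>
    rw [Finsupp.mapDomain_single, Wgen_single, Wgen_single,
      Finsupp.mapDomain_single, Finsupp.smul_single]
    cases x <;> (congr 1; simp [List.count_cons, pow_succ]; ring)

lemma op_ext {f g : Sp →ₗ[ℂ] Sp}
    (h : ∀ w, f (Finsupp.single w 1) = g (Finsupp.single w 1)) : f = g := by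
  apply Finsupp.lhom_ext; intro w b
  have hb : (Finsupp.single w b : Sp) = b • Finsupp.single w 1 := by
    rw [Finsupp.smul_single, smul_eq_mul, mul_one]
  rw [hb, map_smul, map_smul, h]

variable (q qm r : ℝ)

lemma rel_cC (i : Bool) :
    creL false ∘ₗ creR i = creR i ∘ₗ creL false := by
  apply op_ext; intro w
  simp [LinearMap.comp_apply, creR_single, creL_single]

lemma rel_aC :
    annL (Qmat q qm r) false ∘ₗ creR false
      = creR false ∘ₗ annL (Qmat q qm r) false + Wgen q r := by
  apply op_ext; intro w
  induction w with
  | nil =>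
    simp [LinearMap.comp_apply, creR_single, annL_single, annVecL, Wgen_single, Qmat]
  | cons x t ih =>
    rw [← Finsupp.mapDomain_single (f := List.cons x)]
    simp only [LinearMap.comp_apply, LinearMap.add_apply] at ih ⊢
    rw [creR_cons, annL_cons, annL_cons, Wgen_cons, ih]
    cases x <;>
      simp [Qmat, map_add, map_smul, Finsupp.mapDomain_add, Finsupp.mapDomain_smul,
        creR_cons, smul_add] <;> module

lemma rel_Ac :
    annR (Qmat q qm r) false ∘ₗ creL false
      = creL false ∘ₗ annR (Qmat q qm r) false + Wgen q r := by
  apply op_ext; intro w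
  simp only [LinearMap.comp_apply, LinearMap.add_apply]
  rw [creL_single, annR_single, annR_single, one_smul, one_smul, annVecR,
    map_prod_count, Wgen_single, creL_eq]
  simp [Qmat, Finsupp.smul_single, add_comm]

lemma rel_aW (c₀ c₁ : ℂ) :
    annL (Qmat q qm r) false ∘ₗ Wgen c₀ c₁
      = c₀ • (Wgen c₀ c₁ ∘ₗ annL (Qmat q qm r) false) := by
  apply op_ext; intro w
  induction w with
  | nil =>
    simp [LinearMap.comp_apply, annL_single, annVecL, Wgen_single]
  | cons x t ih =>
    rw [← Finsupp.mapDomain_single (f := List.cons x)]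
    simp only [LinearMap.comp_apply, LinearMap.smul_apply] at ih ⊢
    rw [Wgen_cons, map_smul, annL_cons, annL_cons, ih]
    cases x <;>
      simp [Qmat, map_add, map_smul, Finsupp.mapDomain_add, Finsupp.mapDomain_smul,
        Wgen_cons, smul_add, smul_smul] <;>
      match_scalars <;> (try simp only [Complex.coe_algebraMap]) <;> (try push_cast) <;> ring1

lemma rel_aW' (c₀ c₁ : ℂ) (v : Sp) :
    annL (Qmat q qm r) false (Wgen c₀ c₁ v)
      = c₀ • Wgen c₀ c₁ (annL (Qmat q qm r) false v) := by
  have := LinearMap.congr_fun (rel_aW q qm r c₀ c₁) v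
  simpa using this

lemma rel_Wc (c₀ c₁ : ℂ) :
    Wgen c₀ c₁ ∘ₗ creL false = c₀ • (creL false ∘ₗ Wgen c₀ c₁) := by
  apply op_ext; intro w
  simp only [LinearMap.comp_apply, LinearMap.smul_apply]
  rw [creL_single, Wgen_single, Wgen_single, creL_single, Finsupp.smul_single]
  congr 1
  simp [List.count_cons, pow_succ]; ring

lemma rel_aA :
    annL (Qmat q qm r) false ∘ₗ annR (Qmat q qm r) false
      = annR (Qmat q qm r) false ∘ₗ annL (Qmat q qm r) false := by
  apply op_ext; intro w
  induction w with
  | nil =>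
    simp [LinearMap.comp_apply, annL_single, annR_single, annVecL, annVecR]
  | cons x t ih =>
    rw [← Finsupp.mapDomain_single (f := List.cons x)]
    simp only [LinearMap.comp_apply] at ih ⊢
    cases x <;>
      simp [-Finsupp.mapDomain_single, annR_cons, annL_cons, Qmat, map_add, map_smul,
        Finsupp.mapDomain_add, Finsupp.mapDomain_smul, ih, rel_aW', smul_add, smul_smul] <;>
      match_scalars <;> (try simp only [Complex.coe_algebraMap]) <;> (try push_cast) <;> ring1

lemma rel_aC1 :
    annL (Qmat q qm r) false ∘ₗ creR true = creR true ∘ₗ annL (Qmat q qm r) false := by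
  apply op_ext; intro w
  induction w with
  | nil =>
    simp [LinearMap.comp_apply, creR_single, annL_single, annVecL]
  | cons x t ih =>
    rw [← Finsupp.mapDomain_single (f := List.cons x)]
    simp only [LinearMap.comp_apply] at ih ⊢
    rw [creR_cons, annL_cons, annL_cons, ih]
    cases x <;>
      simp [Qmat, map_add, map_smul, Finsupp.mapDomain_add, Finsupp.mapDomain_smul,
        creR_cons, smul_add] <;> module

lemma rel_aA1 :
    annL (Qmat q qm r) false ∘ₗ annR (Qmat q qm r) true
      = annR (Qmat q qm r) true ∘ₗ annL (Qmat q qm r) false := by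
  apply op_ext; intro w
  induction w with
  | nil =>
    simp [LinearMap.comp_apply, annL_single, annR_single, annVecL, annVecR]
  | cons x t ih =>
    rw [← Finsupp.mapDomain_single (f := List.cons x)]
    simp only [LinearMap.comp_apply] at ih ⊢
    cases x <;>
      simp [-Finsupp.mapDomain_single, annR_cons, annL_cons, Qmat, map_add, map_smul,
        Finsupp.mapDomain_add, Finsupp.mapDomain_smul, ih, rel_aW', smul_add, smul_smul] <;>
      match_scalars <;> (try simp only [Complex.coe_algebraMap]) <;> (try push_cast) <;> ring1

lemma rel_A1c :
    annR (Qmat q qm r) true ∘ₗ creL false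
      = creL false ∘ₗ annR (Qmat q qm r) true := by
  apply op_ext; intro w
  simp only [LinearMap.comp_apply]
  rw [creL_single, annR_single, annR_single, one_smul, one_smul, annVecR, creL_eq]
  simp

end DSSYKAux

open DSSYK in
/-- the operator `H̃_{L,0} = a_{L,0} + a†_{L,0} − μ(1−q)·a†_{L,0}∘a_{L,0} + μ·id`
commutes with both generators `H̃_{R,0} = a_{R,0} + a†_{R,0} + μW` and
`H_{R,1} = a_{R,1} + a†_{R,1}` of the EoW-brane boundary algebra. -/
theorem stmt_11 (q qm r : ℝ) (μ : ℂ)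
    (HLt : Sp →ₗ[ℂ] Sp)
    (hHLt : HLt = annL (Qmat q qm r) false + creL false
        - (μ * (1 - (q : ℂ))) • (creL false ∘ₗ annL (Qmat q qm r) false)
        + μ • (LinearMap.id : Sp →ₗ[ℂ] Sp))
    (HRt : Sp →ₗ[ℂ] Sp)
    (hHRt : HRt = annR (Qmat q qm r) false + creR false + μ • Wop q r) :
    HLt ∘ₗ HRt = HRt ∘ₗ HLt ∧
    HLt ∘ₗ HR (Qmat q qm r) true = HR (Qmat q qm r) true ∘ₗ HLt := by
  subst hHLt hHRt
  have T1 : ∀ x : Sp, creR false (annL (Qmat q qm r) false x)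
      = annL (Qmat q qm r) false (creR false x) - Wgen (q:ℂ) (r:ℂ) x := by
    intro x
    have h := LinearMap.congr_fun (DSSYKAux.rel_aC q qm r) x
    simp only [LinearMap.comp_apply, LinearMap.add_apply] at h
    rw [h]; abel
  have T2 : ∀ x : Sp, annR (Qmat q qm r) false (creL false x)
      = creL false (annR (Qmat q qm r) false x) + Wgen (q:ℂ) (r:ℂ) x := by
    intro x
    have h := LinearMap.congr_fun (DSSYKAux.rel_Ac q qm r) x
    simpa only [LinearMap.comp_apply, LinearMap.add_apply] using h
  have T3 : ∀ x : Sp, annR (Qmat q qm r) false (annL (Qmat q qm r) false x)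
      = annL (Qmat q qm r) false (annR (Qmat q qm r) false x) := by
    intro x
    have h := LinearMap.congr_fun (DSSYKAux.rel_aA q qm r) x
    simpa only [LinearMap.comp_apply] using h.symm
  have T4 : ∀ x : Sp, creR false (creL false x) = creL false (creR false x) := by
    intro x
    have h := LinearMap.congr_fun (DSSYKAux.rel_cC false) x
    simpa only [LinearMap.comp_apply] using h.symm
  have T5 : ∀ x : Sp, annL (Qmat q qm r) false (Wgen (q:ℂ) (r:ℂ) x)
      = (q:ℂ) • Wgen (q:ℂ) (r:ℂ) (annL (Qmat q qm r) false x) :=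
    DSSYKAux.rel_aW' q qm r (q:ℂ) (r:ℂ)
  have T6 : ∀ x : Sp, Wgen (q:ℂ) (r:ℂ) (creL false x)
      = (q:ℂ) • creL false (Wgen (q:ℂ) (r:ℂ) x) := by
    intro x
    have h := LinearMap.congr_fun (DSSYKAux.rel_Wc (q:ℂ) (r:ℂ)) x
    simpa only [LinearMap.comp_apply, LinearMap.smul_apply] using h
  have U1 : ∀ x : Sp, creR true (annL (Qmat q qm r) false x)
      = annL (Qmat q qm r) false (creR true x) := by
    intro x
    have h := LinearMap.congr_fun (DSSYKAux.rel_aC1 q qm r) x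
    simpa only [LinearMap.comp_apply] using h.symm
  have U2 : ∀ x : Sp, annR (Qmat q qm r) true (annL (Qmat q qm r) false x)
      = annL (Qmat q qm r) false (annR (Qmat q qm r) true x) := by
    intro x
    have h := LinearMap.congr_fun (DSSYKAux.rel_aA1 q qm r) x
    simpa only [LinearMap.comp_apply] using h.symm
  have U3 : ∀ x : Sp, annR (Qmat q qm r) true (creL false x)
      = creL false (annR (Qmat q qm r) true x) := by
    intro x
    have h := LinearMap.congr_fun (DSSYKAux.rel_A1c q qm r) x
    simpa only [LinearMap.comp_apply] using h
  have U4 : ∀ x : Sp, creR true (creL false x) = creL false (creR true x) := by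
    intro x
    have h := LinearMap.congr_fun (DSSYKAux.rel_cC true) x
    simpa only [LinearMap.comp_apply] using h.symm
  constructor
  · apply LinearMap.ext; intro v
    simp only [LinearMap.comp_apply, LinearMap.add_apply, LinearMap.sub_apply,
      LinearMap.smul_apply, LinearMap.id_apply, Wop, map_add, map_smul, map_sub,
      smul_add, smul_sub, smul_smul, T1, T2, T3, T4, T5, T6]
    module
  · apply LinearMap.ext; intro v
    simp only [HR, LinearMap.comp_apply, LinearMap.add_apply, LinearMap.sub_apply,
      LinearMap.smul_apply, LinearMap.id_apply, map_add, map_smul, map_sub,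
      smul_add, smul_sub, smul_smul, U1, U2, U3, U4]
    module
end

section
/- One-matter screening: in the chord-space model with 0<q<1, r ∈ ℝ, and α ∈ ℂ, for each m ∈ ℕ define the function V_m on binary strings by V_m(w) = αⁿ/[n]!_q if w = 0ⁿ·1·0^m for some n ≥ 0, and V_m(w) = 0 otherwise. Then, with the coordinatewise extension of a_{R,0}, one has a_{R,0} V_m = [m]_q·V_{m−1} + α·r·q^m·V_m pointwise on binary strings (for m = 0 the first term is absent since [0]_q = 0). Hence when probed by gravity operators the q-coherently dressed matter chord behaves exactly like an EoW brane with effective tension μ = αr. -/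
namespace DSSYK

/-- The q-integer `[n]_q = (1 − qⁿ)/(1 − q)` (as a complex number). -/
noncomputable def qIntC (q : ℝ) (n : ℕ) : ℂ := (1 - (q : ℂ) ^ n) / (1 - (q : ℂ))

/-- The q-factorial `[n]!_q = Π_{j=1}^{n} [j]_q` (as a complex number). -/
noncomputable def qFactC (q : ℝ) (n : ℕ) : ℂ := ∏ j ∈ Finset.range n, qIntC q (j + 1)

/-- The q-Pochhammer symbol `(q;q)_n = Π_{j=0}^{n−1}(1 − q^{j+1})` (as a complex number). -/
noncomputable def qPochQC (q : ℝ) (n : ℕ) : ℂ := ∏ j ∈ Finset.range n, (1 - (q : ℂ) ^ (j + 1))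

/-- The infinite q-Pochhammer symbol `(x;q)_∞ = Π_{j=0}^{∞}(1 − x qʲ)`. -/
noncomputable def qPochInfC (q : ℝ) (x : ℂ) : ℂ := ∏' j : ℕ, (1 - x * (q : ℂ) ^ j)

end DSSYK

namespace DSSYK

/-- Coordinatewise (transpose) extension of an operator `T` on the chord space to
arbitrary coefficient functions on binary strings:
`(T f)(u) = Σ_w T_{u,w} f(w)`, where `T_{u,w}` is the coefficient of `δ_u` in `T δ_w`. -/
noncomputable def coordAct (T : Sp →ₗ[ℂ] Sp) (f : Str → ℂ) : Str → ℂ :=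
  fun u => ∑' w : Str, (T (Finsupp.single w 1)) u * f w

/-- The string `0^{n_k} 1 0^{n_{k−1}} 1 ⋯ 0^{n_1} 1 0^m` (recursion in `k`). -/
def braneString (ns : ℕ → ℕ) (m : ℕ) : ℕ → Str
  | 0 => List.replicate m false
  | k + 1 => List.replicate (ns (k + 1)) false ++ true :: braneString ns m k

/-- The coefficient of the `k`-matter brane state on the string with zero-block
lengths `n_k, …, n_1` (and final block `m`):
`(Π_{i=1}^{k} α_i^{n_i}/[n_i]!_q) · Π_{i=1}^{k−1} ((α_{i+1} rᶦ q^{n_1+⋯+n_i}/α₁; q)_∞)⁻¹`. -/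
noncomputable def braneCoeff (q r : ℝ) (α : ℕ → ℂ) (k : ℕ) (ns : ℕ → ℕ) : ℂ :=
  (∏ i ∈ Finset.Icc 1 k, α i ^ ns i / qFactC q (ns i)) *
    ∏ i ∈ Finset.Icc 1 (k - 1),
      (qPochInfC q
        (α (i + 1) * (r : ℂ) ^ i * (q : ℂ) ^ (∑ j ∈ Finset.Icc 1 i, ns j) / α 1))⁻¹

open Classical in
/-- The `k`-matter brane state `V_m^{(α_k,…,α₁)}`, as a coefficient function on binary
strings: supported on strings `0^{n_k} 1 0^{n_{k−1}} 1 ⋯ 0^{n_1} 1 0^m`, where it takes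
the value `braneCoeff`. -/
noncomputable def braneState (q r : ℝ) (α : ℕ → ℂ) (k m : ℕ) (w : Str) : ℂ :=
  if h : ∃ ns : ℕ → ℕ, w = braneString ns m k then braneCoeff q r α k h.choose else 0

end DSSYK

namespace DSSYK

open Classical in
/-- The one-matter dressed state `V_m`: `V_m(w) = αⁿ/[n]!_q` if
`w = 0ⁿ·1·0^m` for some `n ≥ 0`, and `V_m(w) = 0` otherwise. -/
noncomputable def oneMatter (q : ℝ) (α : ℂ) (m : ℕ) (w : Str) : ℂ :=
  if h : ∃ n : ℕ, w = List.replicate n false ++ true :: List.replicate m false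
  then α ^ h.choose / qFactC q h.choose else 0

end DSSYK

namespace DSSYK

variable {q qm r : ℝ}

lemma qIntC_zero : qIntC q 0 = 0 := by simp [qIntC]

lemma qIntC_succ (hq : (q:ℝ) ≠ 1) (m : ℕ) : qIntC q (m+1) = (q:ℂ)^m + qIntC q m := by
  have h1 : (1 - (q:ℂ)) ≠ 0 := by
    simpa [sub_eq_zero] using fun h => hq (by exact_mod_cast h.symm)
  unfold qIntC
  field_simp
  ring

lemma rep_true_inj : ∀ (n n' : ℕ) (l l' : List Bool),
    List.replicate n false ++ true :: l = List.replicate n' false ++ true :: l' →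
    n = n' ∧ l = l' := by
  intro n
  induction n with
  | zero => intro n' l l' h; cases n' with
    | zero => simpa using h
    | succ k => simp [List.replicate_succ] at h
  | succ k ih => intro n' l l' h; cases n' with
    | zero => simp [List.replicate_succ] at h
    | succ k' =>
      simp only [List.replicate_succ, List.cons_append, List.cons.injEq] at h
      obtain ⟨h1, h2⟩ := ih k' l l' h.2
      exact ⟨by omega, h2⟩

lemma annVecR_rep (hq : (q:ℝ) ≠ 1) (m : ℕ) :
    annVecR (Qmat q qm r) false (List.replicate m false)
      = qIntC q m • Finsupp.single (List.replicate (m-1) false) (1:ℂ) := by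
  induction m with
  | zero => simp [annVecR, qIntC_zero]
  | succ k ih =>
    rw [List.replicate_succ, annVecR, ih]
    cases k with
    | zero => simp [annVecR, qIntC_zero, qIntC_succ hq, Qmat]
    | succ j =>
      simp only [Nat.succ_sub_one, Finsupp.mapDomain_smul, Finsupp.mapDomain_single]
      rw [← List.replicate_succ]
      simp only [Nat.succ_sub_one, if_pos rfl, List.map_replicate, Qmat,
        List.prod_replicate]
      rw [show j+1+1 = (j+1)+1 from rfl, qIntC_succ hq (j+1)]
      simp [add_smul]

/-- deletion on `0^n 1 0^m` -/
lemma annVecR_key (hq : (q:ℝ) ≠ 1) (m n : ℕ) :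
    annVecR (Qmat q qm r) false
        (List.replicate n false ++ true :: List.replicate m false)
      = (qIntC q n * r * (q:ℂ)^m) •
          Finsupp.single (List.replicate (n-1) false ++ true :: List.replicate m false) (1:ℂ)
        + qIntC q m •
          Finsupp.single (List.replicate n false ++ true :: List.replicate (m-1) false) (1:ℂ) := by
  induction n with
  | zero =>
    simp only [List.replicate, List.nil_append, annVecR]
    rw [annVecR_rep hq m]
    simp [qIntC_zero, Finsupp.mapDomain_smul, Finsupp.mapDomain_single]
  | succ k ih =>
    rw [List.replicate_succ, List.cons_append, annVecR, ih]
    simp only [Finsupp.mapDomain_add, Finsupp.mapDomain_smul, Finsupp.mapDomain_single,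
      if_pos rfl, List.map_append, List.map_replicate, List.map_cons, List.prod_append,
      List.prod_cons, List.prod_replicate, Qmat]
    cases k with
    | zero =>
      simp only [qIntC_zero, zero_mul, zero_smul, zero_add, if_pos trivial,
        List.cons_append, Nat.succ_sub_one]
      congr 2
      rw [qIntC_succ hq 0, qIntC_zero]; ring
    | succ j =>
      rw [if_pos trivial]
      rw [show (false :: (List.replicate (j+1) false ++ true :: List.replicate (m-1) false))
            = List.replicate (j+1+1) false ++ true :: List.replicate (m-1) false by
          simp [List.replicate_succ]]
      rw [show (false :: List.replicate (j+1) false ++ true :: List.replicate (m-1) false)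
            = List.replicate (j+1+1) false ++ true :: List.replicate (m-1) false by
          simp [List.replicate_succ]]
      rw [show (false :: (List.replicate (j+1-1) false ++ true :: List.replicate m false))
            = List.replicate (j+1) false ++ true :: List.replicate m false by
          simp [List.replicate_succ]]
      rw [← add_assoc, ← add_smul]
      simp only [Nat.succ_sub_one]
      congr 2
      rw [show j+1+1 = (j+1)+1 from rfl, qIntC_succ hq (j+1)]
      ring

lemma qFactC_succ (n : ℕ) : qFactC q (n+1) = qFactC q n * qIntC q (n+1) :=
  Finset.prod_range_succ _ _

lemma qIntC_ne_zero (hq0 : 0 < q) (hq1 : q < 1) (n : ℕ) : qIntC q (n+1) ≠ 0 := by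
  have h1 : q ^ (n+1) < 1 := pow_lt_one₀ (le_of_lt hq0) hq1 (by omega)
  have h2 : (1 - (q:ℂ)^(n+1)) ≠ 0 := by
    have : ((1 - q^(n+1) : ℝ) : ℂ) ≠ 0 := by
      exact_mod_cast ne_of_gt (by linarith : (0:ℝ) < 1 - q^(n+1))
    simpa using this
  have h3 : (1 - (q:ℂ)) ≠ 0 := by
    have : ((1 - q : ℝ) : ℂ) ≠ 0 := by
      exact_mod_cast ne_of_gt (by linarith : (0:ℝ) < 1 - q)
    simpa using this
  exact div_ne_zero h2 h3

lemma qFactC_ne_zero (hq0 : 0 < q) (hq1 : q < 1) (n : ℕ) : qFactC q n ≠ 0 := by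
  induction n with
  | zero => simp [qFactC]
  | succ k ih =>
    rw [qFactC_succ]
    exact mul_ne_zero ih (qIntC_ne_zero hq0 hq1 k)

lemma oneMatter_eval (α : ℂ) (m n : ℕ) :
    oneMatter q α m (List.replicate n false ++ true :: List.replicate m false)
      = α ^ n / qFactC q n := by
  classical
  rw [oneMatter]
  have h : ∃ k : ℕ, List.replicate n false ++ true :: List.replicate m false
      = List.replicate k false ++ true :: List.replicate m false := ⟨n, rfl⟩
  rw [dif_pos h]
  obtain ⟨h1, -⟩ := rep_true_inj _ _ _ _ h.choose_spec
  rw [← h1]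

lemma oneMatter_zero (α : ℂ) (m : ℕ) (w : Str)
    (hw : ∀ n, w ≠ List.replicate n false ++ true :: List.replicate m false) :
    oneMatter q α m w = 0 := by
  classical
  rw [oneMatter, dif_neg]
  rintro ⟨n, hn⟩
  exact hw n hn

/-- number of leading `false`s -/
def leadF (w : Str) : ℕ := (w.takeWhile (fun x => x == false)).length

lemma leadF_eq (k : ℕ) (l : List Bool) :
    leadF (List.replicate k false ++ true :: l) = k := by
  induction k with
  | zero => simp [leadF, List.takeWhile]
  | succ j ih =>
    rw [List.replicate_succ, List.cons_append]
    simpa [leadF, List.takeWhile] using ih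

end DSSYK

open DSSYK in
/-- one-matter screening.  With the coordinatewise extension of `a_{R,0}`,
`a_{R,0} V_m = [m]_q·V_{m−1} + α·r·q^m·V_m` pointwise on binary strings: the
q-coherently dressed matter chord behaves exactly like an EoW brane of effective
tension `μ = α·r`. -/
theorem stmt_12 (q qm r : ℝ) (hq0 : 0 < q) (hq1 : q < 1) (α : ℂ) :
    ∀ (m : ℕ) (w : Str),
      coordAct (annR (Qmat q qm r) false) (oneMatter q α m) w
        = qIntC q m * oneMatter q α (m - 1) w
          + α * (r : ℂ) * (q : ℂ) ^ m * oneMatter q α m w := by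
  intro m u
  classical
  have hq : (q:ℝ) ≠ 1 := ne_of_lt hq1
  have entry : ∀ n : ℕ,
      (annR (Qmat q qm r) false
        (Finsupp.single (List.replicate n false ++ true :: List.replicate m false) 1)) u
      = (qIntC q n * r * (q:ℂ)^m) *
          (if List.replicate (n-1) false ++ true :: List.replicate m false = u then (1:ℂ) else 0)
        + qIntC q m *
          (if List.replicate n false ++ true :: List.replicate (m-1) false = u then (1:ℂ) else 0) := by
    intro n
    have h0 : annR (Qmat q qm r) false
        (Finsupp.single (List.replicate n false ++ true :: List.replicate m false) 1)
        = annVecR (Qmat q qm r) false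
            (List.replicate n false ++ true :: List.replicate m false) := by
      simp [annR]
    rw [h0, annVecR_key hq]
    simp only [Finsupp.add_apply, Finsupp.smul_apply, Finsupp.single_apply, smul_eq_mul]
  set L := leadF u with hL
  have hsupp : ∀ w ∉ ({List.replicate L false ++ true :: List.replicate m false,
        List.replicate (L+1) false ++ true :: List.replicate m false} : Finset Str),
      (annR (Qmat q qm r) false (Finsupp.single w 1)) u * oneMatter q α m w = 0 := by
    intro w hw
    simp only [Finset.mem_insert, Finset.mem_singleton] at hw
    push_neg at hw
    by_cases hwn : ∃ n, w = List.replicate n false ++ true :: List.replicate m false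
    · obtain ⟨n, rfl⟩ := hwn
      have hn1 : n ≠ L := fun h => hw.1 (by rw [h])
      have hn2 : n ≠ L + 1 := fun h => hw.2 (by rw [h])
      rw [entry n]
      have e1 : ¬(List.replicate (n-1) false ++ true :: List.replicate m false = u) := by
        intro h
        have hLn : L = n - 1 := by rw [hL, ← h, leadF_eq]
        cases n with
        | zero => exact hn1 (by omega)
        | succ k => exact hn2 (by omega)
      have e2 : ¬(List.replicate n false ++ true :: List.replicate (m-1) false = u) := by
        intro h
        have hLn : L = n := by rw [hL, ← h, leadF_eq]
        exact hn1 hLn.symm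
      rw [if_neg e1, if_neg e2]
      ring
    · push_neg at hwn
      rw [oneMatter_zero α m w hwn, mul_zero]
  have hWne : (List.replicate L false ++ true :: List.replicate m false : Str)
      ≠ List.replicate (L+1) false ++ true :: List.replicate m false := by
    intro h
    have := (rep_true_inj _ _ _ _ h).1
    omega
  have htsum : coordAct (annR (Qmat q qm r) false) (oneMatter q α m) u
      = (annR (Qmat q qm r) false
          (Finsupp.single (List.replicate L false ++ true :: List.replicate m false) 1)) u
          * oneMatter q α m (List.replicate L false ++ true :: List.replicate m false)
        + (annR (Qmat q qm r) false
          (Finsupp.single (List.replicate (L+1) false ++ true :: List.replicate m false) 1)) u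
          * oneMatter q α m (List.replicate (L+1) false ++ true :: List.replicate m false) := by
    unfold coordAct
    rw [tsum_eq_sum hsupp, Finset.sum_pair hWne]
  rw [htsum]
  by_cases hA : ∃ a, u = List.replicate a false ++ true :: List.replicate m false
  · -- u = 0^a 1 0^m
    obtain ⟨a, hu⟩ := hA
    have hLa : L = a := by rw [hL, hu, leadF_eq]
    rw [hLa, entry a, entry (a+1)]
    have c3 : List.replicate (a+1-1) false ++ true :: List.replicate m false = u := by
      rw [Nat.add_sub_cancel, hu]
    have c4 : ¬(List.replicate (a+1) false ++ true :: List.replicate (m-1) false = u) := by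
      intro h
      rw [hu] at h
      have := (rep_true_inj _ _ _ _ h).1
      omega
    rw [if_pos c3, if_neg c4]
    have t1 : (qIntC q a * r * (q:ℂ)^m) *
        (if List.replicate (a-1) false ++ true :: List.replicate m false = u then (1:ℂ) else 0)
        = 0 := by
      cases a with
      | zero => simp [qIntC_zero]
      | succ k =>
        rw [if_neg, mul_zero]
        intro h
        rw [hu] at h
        have := (rep_true_inj _ _ _ _ h).1
        omega
    have t2 : qIntC q m *
        (if List.replicate a false ++ true :: List.replicate (m-1) false = u then (1:ℂ) else 0)
        = 0 := by
      cases m with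
      | zero => simp [qIntC_zero]
      | succ k =>
        rw [if_neg, mul_zero]
        intro h
        rw [hu] at h
        have h2 := (rep_true_inj _ _ _ _ h).2
        have := congrArg List.length h2
        simp at this
    have t3 : qIntC q m * oneMatter q α (m-1) u = 0 := by
      cases m with
      | zero => simp [qIntC_zero]
      | succ k =>
        rw [oneMatter_zero α _ u, mul_zero]
        intro n hn
        rw [hu] at hn
        have h2 := (rep_true_inj _ _ _ _ hn).2
        have := congrArg List.length h2
        simp [Nat.succ_sub_one] at this
    rw [t1, t2, t3, hu, oneMatter_eval, oneMatter_eval]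
    have hF : qFactC q (a+1) = qFactC q a * qIntC q (a+1) := qFactC_succ a
    have hI : qIntC q (a+1) ≠ 0 := qIntC_ne_zero hq0 hq1 a
    have hFa : qFactC q a ≠ 0 := qFactC_ne_zero hq0 hq1 a
    rw [hF]
    field_simp
    ring
  · by_cases hB : ∃ a, u = List.replicate a false ++ true :: List.replicate (m-1) false
    · -- u = 0^a 1 0^(m-1), m ≥ 1
      obtain ⟨a, hu⟩ := hB
      have hm : m ≠ 0 := by
        intro h
        exact hA ⟨a, by rw [hu, h]⟩
      obtain ⟨m', rfl⟩ := Nat.exists_eq_succ_of_ne_zero hm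
      have hLa : L = a := by rw [hL, hu, leadF_eq]
      rw [hLa, entry a, entry (a+1)]
      push_neg at hA
      have c1 : ¬(List.replicate (a-1) false ++ true :: List.replicate (m'+1) false = u) :=
        fun h => hA (a-1) h.symm
      have c2 : List.replicate a false ++ true :: List.replicate (m'+1-1) false = u := by
        rw [Nat.succ_sub_one, hu, Nat.succ_sub_one]
      have c3 : ¬(List.replicate (a+1-1) false ++ true :: List.replicate (m'+1) false = u) :=
        fun h => hA (a+1-1) h.symm
      have c4 : ¬(List.replicate (a+1) false ++ true :: List.replicate (m'+1-1) false = u) := by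
        intro h
        rw [hu] at h
        rw [Nat.succ_sub_one] at h
        have := (rep_true_inj _ _ _ _ h).1
        omega
      rw [if_pos c2, if_neg c1, if_neg c3, if_neg c4]
      have t3 : oneMatter q α (m'+1) u = 0 :=
        oneMatter_zero α _ u fun n hn => hA n hn
      rw [t3, hu, Nat.succ_sub_one, oneMatter_eval, oneMatter_eval, oneMatter_eval]
      ring
    · -- u is not of either form
      push_neg at hA
      push_neg at hB
      rw [entry L, entry (L+1)]
      have c1 : ¬(List.replicate (L-1) false ++ true :: List.replicate m false = u) :=
        fun h => hA (L-1) h.symm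
      have c3 : ¬(List.replicate (L+1-1) false ++ true :: List.replicate m false = u) :=
        fun h => hA (L+1-1) h.symm
      have c2 : ¬(List.replicate L false ++ true :: List.replicate (m-1) false = u) :=
        fun h => hB L h.symm
      have c4 : ¬(List.replicate (L+1) false ++ true :: List.replicate (m-1) false = u) :=
        fun h => hB (L+1) h.symm
      have t3 : oneMatter q α m u = 0 := oneMatter_zero α _ u fun n hn => hA n hn
      have t4 : oneMatter q α (m-1) u = 0 := oneMatter_zero α _ u fun n hn => hB n hn
      rw [if_neg c1, if_neg c2, if_neg c3, if_neg c4, t3, t4]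
      ring
end

section
/- Let 0<q<1 (so (q;q)_n ≠ 0 for all n) and c ∈ ℂ. Define κ_s = Σ_{p=0}^{s} (−c·q^s)^p · q^{−p(p−1)/2}/(q;q)_p for s ≥ 0. Then for every integer k ≥ 0: Σ_{s=0}^{k} κ_s · q^{k(k−s)} · c^{k−s}/(q;q)_{k−s} = 1. (This identity determines the kernel inverting the expansion of chord-number states in the overcomplete matter-brane basis.) -/
/-- The q-Pochhammer symbol `(q;q)_n = Π_{j=0}^{n−1}(1 − q^{j+1})` (as a complex number). -/
noncomputable def qPochQC (q : ℝ) (n : ℕ) : ℂ := ∏ j ∈ Finset.range n, (1 - (q : ℂ) ^ (j + 1))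

/-- The inversion-kernel coefficients
`κ_s = Σ_{p=0}^{s} (−c·q^s)^p · q^{−p(p−1)/2} / (q;q)_p`. -/
noncomputable def kappa (q : ℝ) (c : ℂ) (s : ℕ) : ℂ :=
  ∑ p ∈ Finset.range (s + 1),
    (-(c * (q : ℂ) ^ s)) ^ p / ((q : ℂ) ^ (p * (p - 1) / 2) * qPochQC q p)

/-! ### Auxiliary lemmas -/

/-- triangle numbers as sums -/
def triN (n : ℕ) : ℕ := ∑ i ∈ Finset.range n, i

lemma triN_eq (n : ℕ) : n * (n - 1) / 2 = triN n := (Finset.sum_range_id n).symm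

lemma triN_succ (n : ℕ) : triN (n + 1) = triN n + n := Finset.sum_range_succ _ _

lemma triN_add (j d : ℕ) : triN (j + d) = triN j + triN d + j * d := by
  induction d with
  | zero => simp [triN]
  | succ d ih =>
    have h1 : j + (d + 1) = (j + d) + 1 := by omega
    rw [h1, triN_succ, ih, triN_succ]
    ring

lemma one_sub_q_pow_ne {q : ℝ} (hq0 : 0 < q) (hq1 : q < 1) (n : ℕ) :
    (1 : ℂ) - (q : ℂ) ^ (n + 1) ≠ 0 := by
  have h : q ^ (n + 1) < 1 := pow_lt_one₀ hq0.le hq1 (Nat.succ_ne_zero n)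
  have h2 : (1 : ℂ) - (q : ℂ) ^ (n + 1) = ((1 - q ^ (n + 1) : ℝ) : ℂ) := by push_cast; ring
  rw [h2, Ne, Complex.ofReal_eq_zero]
  intro h3; linarith

lemma qPoch_ne_zero {q : ℝ} (hq0 : 0 < q) (hq1 : q < 1) (n : ℕ) : qPochQC q n ≠ 0 := by
  unfold qPochQC
  exact Finset.prod_ne_zero_iff.mpr fun j _ => one_sub_q_pow_ne hq0 hq1 j

lemma qPoch_succ (q : ℝ) (n : ℕ) :
    qPochQC q (n + 1) = qPochQC q n * (1 - (q : ℂ) ^ (n + 1)) :=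
  Finset.prod_range_succ _ _

/-- Gaussian binomial, defined by the q-Pascal recurrence. -/
noncomputable def myB (q : ℝ) : ℕ → ℕ → ℂ
  | 0, 0 => 1
  | 0, _ + 1 => 0
  | _ + 1, 0 => 1
  | m + 1, j + 1 => myB q m (j + 1) + (q : ℂ) ^ (m - j) * myB q m j

lemma myB_gt {q : ℝ} : ∀ m j : ℕ, m < j → myB q m j = 0 := by
  intro m
  induction m with
  | zero => intro j hj; match j, hj with | j + 1, _ => rfl
  | succ m ih =>
    intro j hj
    match j, hj with
    | j + 1, hj =>
      have h1 : m < j + 1 := by omega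
      have h2 : m < j := by omega
      show myB q m (j + 1) + (q : ℂ) ^ (m - j) * myB q m j = 0
      rw [ih _ h1, ih _ h2]; ring

lemma myB_spec {q : ℝ} (hq0 : 0 < q) (hq1 : q < 1) : ∀ m j : ℕ, j ≤ m →
    myB q m j * (qPochQC q j * qPochQC q (m - j)) = qPochQC q m := by
  intro m
  induction m with
  | zero =>
    intro j hj
    interval_cases j
    show (1 : ℂ) * _ = _
    simp [qPochQC]
  | succ m ih =>
    intro j hj
    match j with
    | 0 =>
      show (1 : ℂ) * (qPochQC q 0 * qPochQC q (m + 1)) = qPochQC q (m + 1)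
      simp [qPochQC]
    | j + 1 =>
      show (myB q m (j + 1) + (q : ℂ) ^ (m - j) * myB q m j) *
        (qPochQC q (j + 1) * qPochQC q (m + 1 - (j + 1))) = qPochQC q (m + 1)
      have hmj : m + 1 - (j + 1) = m - j := by omega
      rw [hmj]
      rcases Nat.lt_or_ge j m with hlt | hge
      · -- j + 1 ≤ m
        have ih1 := ih (j + 1) (by omega)
        have ih2 := ih j (by omega)
        have hqq : (q : ℂ) ^ (m - j) * ((q : ℂ) ^ (j + 1)) = (q : ℂ) ^ (m + 1) := by
          rw [← pow_add]; congr 1; omega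
        have hme : m - (j + 1) + 1 = m - j := by omega
        have hsplit : qPochQC q (m - j) = qPochQC q (m - (j+1)) * (1 - (q:ℂ) ^ (m - j)) := by
          rw [← hme, qPoch_succ]
        calc (myB q m (j + 1) + (q : ℂ) ^ (m - j) * myB q m j) *
              (qPochQC q (j + 1) * qPochQC q (m - j))
            = (myB q m (j + 1) * (qPochQC q (j+1) * qPochQC q (m - (j+1)))) * (1 - (q:ℂ) ^ (m - j))
              + (q : ℂ) ^ (m - j) * (myB q m j * (qPochQC q j * qPochQC q (m - j))) *
                (1 - (q:ℂ)^(j+1)) := by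
              rw [hsplit, qPoch_succ q j]
              ring
          _ = qPochQC q m * ((1 - (q:ℂ) ^ (m - j)) + (q : ℂ) ^ (m - j) * (1 - (q:ℂ)^(j+1))) := by
              rw [ih1, ih2]; ring
          _ = qPochQC q m * (1 - (q:ℂ) ^ (m + 1)) := by
              rw [mul_sub, mul_sub, mul_one, hqq]; ring
          _ = qPochQC q (m + 1) := (qPoch_succ q m).symm
      · -- j = m
        have hj' : m = j := by omega
        subst hj'
        rw [myB_gt m (m + 1) (by omega)]
        have ihm := ih m le_rfl
        simp only [Nat.sub_self] at ihm ⊢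
        have hPm0 : qPochQC q 0 = 1 := by simp [qPochQC]
        rw [hPm0, mul_one] at ihm
        have hB : myB q m m = 1 := by
          have hne := qPoch_ne_zero hq0 hq1 (q := q) m
          exact mul_right_cancel₀ hne (by rw [ihm, one_mul])
        rw [hB, hPm0]
        simp [qPoch_succ]

/-- alternating sum with Gaussian binomials vanishes for m ≥ 1 -/
lemma T_vanish {q : ℝ} : ∀ m : ℕ, 1 ≤ m →
    ∑ j ∈ Finset.range (m + 1), (-1 : ℂ) ^ j * (q : ℂ) ^ triN j * myB q m j = 0 := by
  have hrec : ∀ m : ℕ,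
      ∑ j ∈ Finset.range (m + 2), (-1 : ℂ) ^ j * (q : ℂ) ^ triN j * myB q (m + 1) j
      = (1 - (q : ℂ) ^ m) *
        ∑ j ∈ Finset.range (m + 1), (-1 : ℂ) ^ j * (q : ℂ) ^ triN j * myB q m j := by
    intro m
    rw [Finset.sum_range_succ' (fun j => (-1 : ℂ) ^ j * (q : ℂ) ^ triN j * myB q (m + 1) j) (m+1)]
    have hterm : ∀ j ∈ Finset.range (m + 1),
        (-1 : ℂ) ^ (j+1) * (q : ℂ) ^ triN (j+1) * myB q (m + 1) (j+1)
        = (-1 : ℂ) ^ (j+1) * (q : ℂ) ^ triN (j+1) * myB q m (j+1)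
          + (-((q:ℂ)^m)) * ((-1 : ℂ) ^ j * (q : ℂ) ^ triN j * myB q m j) := by
      intro j hj
      rw [Finset.mem_range] at hj
      show (-1 : ℂ) ^ (j+1) * (q : ℂ) ^ triN (j+1) *
          (myB q m (j + 1) + (q : ℂ) ^ (m - j) * myB q m j) = _
      have hq : (q : ℂ) ^ triN (j+1) * (q : ℂ) ^ (m - j) = (q : ℂ) ^ m * (q : ℂ) ^ triN j := by
        rw [← pow_add, ← pow_add, triN_succ]
        congr 1; omega
      rw [pow_succ (-1 : ℂ) j]
      calc ((-1 : ℂ) ^ j * -1) * (q : ℂ) ^ triN (j+1) *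
            (myB q m (j + 1) + (q : ℂ) ^ (m - j) * myB q m j)
          = (-1 : ℂ) ^ j * -1 * (q : ℂ) ^ triN (j+1) * myB q m (j+1)
            + (-1:ℂ)^j * -1 * ((q : ℂ) ^ triN (j+1) * (q : ℂ) ^ (m - j)) * myB q m j := by ring
        _ = _ := by rw [hq]; ring
    rw [Finset.sum_congr rfl hterm, Finset.sum_add_distrib, ← Finset.mul_sum]
    have h0 : ((-1 : ℂ) ^ 0 * (q : ℂ) ^ triN 0 * myB q (m + 1) 0) =
        (-1 : ℂ) ^ 0 * (q : ℂ) ^ triN 0 * myB q m 0 := by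
      cases m <;> rfl
    have hsum : (∑ j ∈ Finset.range (m + 1),
          (-1 : ℂ) ^ (j+1) * (q : ℂ) ^ triN (j+1) * myB q m (j+1))
        + (-1 : ℂ) ^ 0 * (q : ℂ) ^ triN 0 * myB q m 0
        = ∑ j ∈ Finset.range (m + 1), (-1 : ℂ) ^ j * (q : ℂ) ^ triN j * myB q m j := by
      rw [← Finset.sum_range_succ' (fun j => (-1 : ℂ) ^ j * (q : ℂ) ^ triN j * myB q m j) (m+1),
        Finset.sum_range_succ, myB_gt m (m + 1) (by omega)]
      ring
    rw [h0]
    linear_combination hsum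
  intro m hm
  induction m with
  | zero => omega
  | succ m ih =>
    rcases Nat.eq_zero_or_pos m with h0 | hpos
    · subst h0
      show ∑ j ∈ Finset.range 2, (-1 : ℂ) ^ j * (q : ℂ) ^ triN j * myB q 1 j = 0
      rw [Finset.sum_range_succ, Finset.sum_range_one]
      have h1 : myB q 1 0 = 1 := rfl
      have h2 : myB q 1 1 = 1 := by
        show myB q 0 1 + (q : ℂ) ^ (0 - 0) * myB q 0 0 = 1
        show (0 : ℂ) + (q : ℂ) ^ (0 - 0) * 1 = 1
        simp
      rw [h1, h2]
      simp [triN]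
    · rw [hrec m, ih hpos, mul_zero]

/-- Core vanishing sum. -/
lemma V_vanish {q : ℝ} (hq0 : 0 < q) (hq1 : q < 1) : ∀ m : ℕ, 1 ≤ m →
    ∑ j ∈ Finset.range (m + 1),
      (-1 : ℂ) ^ j * (q : ℂ) ^ triN j / (qPochQC q j * qPochQC q (m - j)) = 0 := by
  intro m hm
  have hT := T_vanish (q := q) m hm
  have hPm := qPoch_ne_zero hq0 hq1 (q := q) m
  have heq : ∑ j ∈ Finset.range (m + 1),
      (-1 : ℂ) ^ j * (q : ℂ) ^ triN j / (qPochQC q j * qPochQC q (m - j))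
      = (∑ j ∈ Finset.range (m + 1), (-1 : ℂ) ^ j * (q : ℂ) ^ triN j * myB q m j)
        / qPochQC q m := by
    rw [Finset.sum_div]
    apply Finset.sum_congr rfl
    intro j hj
    rw [Finset.mem_range] at hj
    have hspec := myB_spec hq0 hq1 m j (by omega)
    have h1 := qPoch_ne_zero hq0 hq1 (q := q) j
    have h2 := qPoch_ne_zero hq0 hq1 (q := q) (m - j)
    field_simp
    rw [← hspec]; ring
  rw [heq, hT, zero_div]

/-- reflected core vanishing sum. -/
lemma V'_vanish {q : ℝ} (hq0 : 0 < q) (hq1 : q < 1) : ∀ m : ℕ, 1 ≤ m →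
    ∑ j ∈ Finset.range (m + 1),
      (-1 : ℂ) ^ j * (q : ℂ) ^ triN (m - j) / (qPochQC q j * qPochQC q (m - j)) = 0 := by
  intro m hm
  have hrefl := Finset.sum_range_reflect
    (fun j => (-1 : ℂ) ^ j * (q : ℂ) ^ triN (m - j) / (qPochQC q j * qPochQC q (m - j))) (m + 1)
  rw [← hrefl]
  have hcongr : ∀ j ∈ Finset.range (m + 1),
      (-1 : ℂ) ^ (m + 1 - 1 - j) * (q : ℂ) ^ triN (m - (m + 1 - 1 - j)) /
        (qPochQC q (m + 1 - 1 - j) * qPochQC q (m - (m + 1 - 1 - j)))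
      = (-1 : ℂ)^m * ((-1 : ℂ) ^ j * (q : ℂ) ^ triN j / (qPochQC q j * qPochQC q (m - j))) := by
    intro j hj
    rw [Finset.mem_range] at hj
    have e1 : m + 1 - 1 - j = m - j := by omega
    have e2 : m - (m - j) = j := by omega
    rw [e1, e2]
    have hj2 : ((-1 : ℂ) ^ j) * ((-1 : ℂ) ^ j) = 1 := by
      rw [← pow_add]
      exact Even.neg_one_pow ⟨j, rfl⟩
    have hsign : (-1 : ℂ) ^ (m - j) = (-1 : ℂ) ^ m * (-1 : ℂ) ^ j := by
      have hmm : (-1 : ℂ) ^ (m - j) * (-1 : ℂ) ^ j = (-1 : ℂ) ^ m := by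
        rw [← pow_add]; congr 1; omega
      calc (-1 : ℂ) ^ (m - j) = (-1 : ℂ) ^ (m - j) * (((-1 : ℂ) ^ j) * ((-1 : ℂ) ^ j)) := by
            rw [hj2, mul_one]
        _ = (-1 : ℂ) ^ m * (-1 : ℂ) ^ j := by rw [← mul_assoc, hmm]
    rw [hsign]
    ring
  rw [Finset.sum_congr rfl hcongr, ← Finset.mul_sum, V_vanish hq0 hq1 m hm, mul_zero]

/-- the kernel identity
`Σ_{s=0}^{k} κ_s · q^{k(k−s)} · c^{k−s}/(q;q)_{k−s} = 1` for every `k ≥ 0`. -/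
theorem stmt_14 (q : ℝ) (hq0 : 0 < q) (hq1 : q < 1) (c : ℂ) :
    ∀ k : ℕ,
      ∑ s ∈ Finset.range (k + 1),
        kappa q c s * (q : ℂ) ^ (k * (k - s)) * c ^ (k - s) / qPochQC q (k - s) = 1 := by
  intro k
  set G : ℕ → ℕ → ℂ := fun s p =>
    (-(c * (q : ℂ) ^ s)) ^ p / ((q : ℂ) ^ (p * (p - 1) / 2) * qPochQC q p)
      * (q : ℂ) ^ (k * (k - s)) * c ^ (k - s) / qPochQC q (k - s) with hG
  have hexpand : ∀ s, kappa q c s * (q : ℂ) ^ (k * (k - s)) * c ^ (k - s) / qPochQC q (k - s)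
      = ∑ p ∈ Finset.range (s + 1), G s p := by
    intro s
    rw [kappa, Finset.sum_mul, Finset.sum_mul, Finset.sum_div]
  rw [Finset.sum_congr rfl (fun s _ => hexpand s)]
  -- reindex the double sum
  have hreindex :
      ∑ s ∈ Finset.range (k + 1), ∑ p ∈ Finset.range (s + 1), G s p
      = ∑ m ∈ Finset.range (k + 1), ∑ t ∈ Finset.range (m + 1), G (k - t) (m - t) := by
    rw [← Finset.sum_range_reflect (fun s => ∑ p ∈ Finset.range (s + 1), G s p) (k + 1)]
    have step1 : ∀ t ∈ Finset.range (k + 1),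
        (∑ p ∈ Finset.range ((k + 1 - 1 - t) + 1), G (k + 1 - 1 - t) p)
        = ∑ m ∈ Finset.Ico t (k + 1), G (k - t) (m - t) := by
      intro t ht
      rw [Finset.mem_range] at ht
      have e1 : k + 1 - 1 - t = k - t := by omega
      rw [e1, Finset.sum_Ico_eq_sum_range]
      have e2 : k + 1 - t = (k - t) + 1 := by omega
      rw [e2]
      apply Finset.sum_congr rfl
      intro p hp
      congr 1
      omega
    rw [Finset.sum_congr rfl step1]
    have := Finset.sum_Ico_Ico_comm 0 (k + 1) (fun t m => G (k - t) (m - t))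
    rw [← Finset.range_eq_Ico] at this
    rw [this]
    simp only [Finset.range_eq_Ico]
  rw [hreindex]
  rw [Finset.sum_eq_single_of_mem 0 (Finset.mem_range.mpr (by omega))]
  · -- the m = 0 term equals 1
    simp only [Finset.sum_range_one, Nat.sub_zero, hG, Nat.sub_self]
    simp [qPochQC]
  · intro m hm hm0
    rw [Finset.mem_range] at hm
    have hm1 : 1 ≤ m := by omega
    have hmk : m ≤ k := by omega
    rw [← Finset.sum_range_reflect (fun t => G (k - t) (m - t)) (m + 1)]
    have hterm : ∀ j ∈ Finset.range (m + 1),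
        G (k - (m + 1 - 1 - j)) (m - (m + 1 - 1 - j))
        = (c ^ m * (q : ℂ) ^ (k * m) / (q : ℂ) ^ triN m) *
          ((-1 : ℂ) ^ j * (q : ℂ) ^ triN (m - j) / (qPochQC q j * qPochQC q (m - j))) := by
      intro j hj
      rw [Finset.mem_range] at hj
      have hj' : j ≤ m := by omega
      have e1 : m + 1 - 1 - j = m - j := by omega
      have e2 : m - (m - j) = j := by omega
      rw [e1, e2]
      simp only [hG]
      have e3 : k - (k - (m - j)) = m - j := by omega
      rw [e3]
      have hnegpow : (-(c * (q : ℂ) ^ (k - (m - j)))) ^ j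
          = (-1 : ℂ) ^ j * c ^ j * (q : ℂ) ^ ((k - (m - j)) * j) := by
        rw [neg_pow, mul_pow, ← pow_mul]
        ring
      rw [hnegpow, triN_eq]
      have hexp : (q:ℂ) ^ ((k - (m - j)) * j) * (q:ℂ) ^ (k * (m - j)) * (q:ℂ) ^ triN m
          = (q:ℂ) ^ (k * m) * (q:ℂ) ^ triN j * (q:ℂ) ^ triN (m - j) := by
        rw [← pow_add, ← pow_add, ← pow_add, ← pow_add]
        congr 1
        obtain ⟨d, rfl⟩ := Nat.exists_eq_add_of_le hj'
        obtain ⟨e, rfl⟩ := Nat.exists_eq_add_of_le hmk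
        have r1 : j + d - j = d := by omega
        have r2 : j + d + e - d = j + e := by omega
        rw [r1, r2, triN_add]
        ring
      have hc : c ^ j * c ^ (m - j) = c ^ m := by
        rw [← pow_add]; congr 1; omega
      have hPj := qPoch_ne_zero hq0 hq1 (q := q) j
      have hPmj := qPoch_ne_zero hq0 hq1 (q := q) (m - j)
      have hqne : (q : ℂ) ≠ 0 := by exact_mod_cast hq0.ne'
      have hd1 : (q:ℂ) ^ (j * (j - 1) / 2) * qPochQC q j * qPochQC q (m - j) ≠ 0 :=
        mul_ne_zero (mul_ne_zero (pow_ne_zero _ hqne) hPj) hPmj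
      rw [triN_eq] at hd1
      have hd2 : (q:ℂ) ^ triN m * (qPochQC q j * qPochQC q (m - j)) ≠ 0 :=
        mul_ne_zero (pow_ne_zero _ hqne) (mul_ne_zero hPj hPmj)
      rw [div_mul_eq_mul_div, div_mul_eq_mul_div, div_div, div_mul_div_comm,
        div_eq_div_iff hd1 hd2]
      calc (-1:ℂ) ^ j * c ^ j * (q:ℂ) ^ ((k - (m - j)) * j) * (q:ℂ) ^ (k * (m - j)) *
            c ^ (m - j) * ((q:ℂ) ^ triN m * (qPochQC q j * qPochQC q (m - j)))
          = ((-1:ℂ) ^ j * (c ^ j * c ^ (m - j))) *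
            ((q:ℂ) ^ ((k - (m - j)) * j) * (q:ℂ) ^ (k * (m - j)) * (q:ℂ) ^ triN m) *
            (qPochQC q j * qPochQC q (m - j)) := by ring
        _ = ((-1:ℂ) ^ j * c ^ m) * ((q:ℂ) ^ (k * m) * (q:ℂ) ^ triN j * (q:ℂ) ^ triN (m - j)) *
            (qPochQC q j * qPochQC q (m - j)) := by rw [hc, hexp]
        _ = _ := by ring
    rw [Finset.sum_congr rfl hterm, ← Finset.mul_sum, V'_vanish hq0 hq1 m hm1, mul_zero]
end
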